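/- arXiv:1907.05882 — 2 statements merged into one kernel-verified Lean document; each statement's English description precedes it below -/
import Mathlib

section
/- Let V be a 4-dimensional real inner product space with orthogonal complex structure J (J² = −Id), ω(x,y) = ⟪Jx,y⟫, and orthonormal basis e₁,...,e₄ satisfying ω(eᵢ,eⱼ)² = 1/3 for all i ≠ j. Define R(X,Y)Z = ⟪X,Z⟫Y − ⟪Y,Z⟫X + ω(X,Z)JY − ω(Y,Z)JX + 2ω(X,Y)JZ. Then for any pairwise distinct i, j, k, one has ⟪R(eᵢ,eⱼ)eₖ, eᵢ⟫ = −3ω(eᵢ,eⱼ)ω(eᵢ,eₖ), and hence ⟪R(eᵢ,eⱼ)eₖ, eᵢ⟫ = ±1; in particular ⟪R(eᵢ,eⱼ)eₖ, eᵢ⟫ ≠ 0. -/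
open RealInnerProductSpace

section ComplexStructure

variable {V : Type*} [NormedAddCommGroup V] [InnerProductSpace ℝ V]

theorem inner_apply_comm_eq_neg_of_isometry_of_sq_eq_neg {J : V →ₗ[ℝ] V}
    (hJ2 : ∀ x, J (J x) = -x) (hJi : ∀ x y, ⟪J x, J y⟫ = ⟪x, y⟫) (x y : V) :
    ⟪J x, y⟫ = -⟪J y, x⟫ := by
  rw [← hJi (J y) x, hJ2, inner_neg_left, neg_neg, real_inner_comm]

theorem inner_apply_self_eq_zero_of_skew {J : V →ₗ[ℝ] V}
    (hskew : ∀ x y, ⟪J x, y⟫ = -⟪J y, x⟫) (x : V) : ⟪J x, x⟫ = 0 := by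
  linarith [hskew x x]

/-- The curvature tensor of constant holomorphic sectional curvature 4 determined by `J`. -/
def constHolCurvature (J : V →ₗ[ℝ] V) (X Y Z : V) : V :=
  ⟪X, Z⟫ • Y - ⟪Y, Z⟫ • X + ⟪J X, Z⟫ • J Y - ⟪J Y, Z⟫ • J X + (2 * ⟪J X, Y⟫) • J Z

theorem inner_constHolCurvature_self_right {J : V →ₗ[ℝ] V}
    (hskew : ∀ x y, ⟪J x, y⟫ = -⟪J y, x⟫) {x y z : V} (hx : ‖x‖ = 1)
    (hxz : ⟪x, z⟫ = 0) (hyz : ⟪y, z⟫ = 0) :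
    ⟪constHolCurvature J x y z, x⟫ = -3 * ⟪J x, y⟫ * ⟪J x, z⟫ := by
  have hxx : ⟪x, x⟫ = 1 := by rw [real_inner_self_eq_norm_sq, hx, one_pow]
  simp only [constHolCurvature, inner_add_left, inner_sub_left, real_inner_smul_left, hxz, hyz,
    hxx, inner_apply_self_eq_zero_of_skew hskew, hskew y x, hskew z x]
  ring

end ComplexStructure

theorem stmt15_general (V : Type*) [NormedAddCommGroup V] [InnerProductSpace ℝ V]
    (J : V →ₗ[ℝ] V) (hJ2 : ∀ x, J (J x) = -x)
    (hJi : ∀ x y, ⟪J x, J y⟫ = ⟪x, y⟫)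
    (ω : V → V → ℝ) (hω : ∀ x y, ω x y = ⟪J x, y⟫)
    (e : OrthonormalBasis (Fin 4) ℝ V)
    (hsq : ∀ i j : Fin 4, i ≠ j → (ω (e i) (e j)) ^ 2 = 1 / 3)
    (R : V → V → V → V)
    (hR : ∀ X Y Z, R X Y Z = ⟪X, Z⟫ • Y - ⟪Y, Z⟫ • X + ω X Z • J Y - ω Y Z • J X
        + (2 * ω X Y) • J Z)
    (i j k : Fin 4) (hij : i ≠ j) (hjk : j ≠ k) (hik : i ≠ k) :
    ⟪R (e i) (e j) (e k), e i⟫ = -3 * ω (e i) (e j) * ω (e i) (e k) ∧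
    (⟪R (e i) (e j) (e k), e i⟫ = 1 ∨ ⟪R (e i) (e j) (e k), e i⟫ = -1) ∧
    ⟪R (e i) (e j) (e k), e i⟫ ≠ 0 := by
  have hskew := inner_apply_comm_eq_neg_of_isometry_of_sq_eq_neg hJ2 hJi
  have hR_eq : R = constHolCurvature J := by
    funext X Y Z
    rw [hR, hω, hω, hω, constHolCurvature]
  have hformula : ⟪R (e i) (e j) (e k), e i⟫ = -3 * ω (e i) (e j) * ω (e i) (e k) := by
    rw [hR_eq, hω, hω]
    exact inner_constHolCurvature_self_right hskew (e.orthonormal.1 i)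
      (e.orthonormal.2 hik) (e.orthonormal.2 hjk)
  have hunit : (-3 * ω (e i) (e j) * ω (e i) (e k)) ^ 2 = 1 := by
    rw [mul_pow, mul_pow, hsq i j hij, hsq i k hik]
    norm_num
  rw [hformula]
  refine ⟨rfl, sq_eq_one_iff.mp hunit, ?_⟩
  rintro h
  rw [h] at hunit
  norm_num at hunit

theorem stmt15 (V : Type*) [NormedAddCommGroup V] [InnerProductSpace ℝ V]
    [FiniteDimensional ℝ V] (hdim : Module.finrank ℝ V = 4)
    (J : V →ₗ[ℝ] V) (hJ2 : ∀ x, J (J x) = -x)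
    (hJi : ∀ x y, ⟪J x, J y⟫ = ⟪x, y⟫)
    (ω : V → V → ℝ) (hω : ∀ x y, ω x y = ⟪J x, y⟫)
    (e : OrthonormalBasis (Fin 4) ℝ V)
    (hsq : ∀ i j : Fin 4, i ≠ j → (ω (e i) (e j)) ^ 2 = 1 / 3)
    (R : V → V → V → V)
    (hR : ∀ X Y Z, R X Y Z = ⟪X, Z⟫ • Y - ⟪Y, Z⟫ • X + ω X Z • J Y - ω Y Z • J X
        + (2 * ω X Y) • J Z)
    (i j k : Fin 4) (hij : i ≠ j) (hjk : j ≠ k) (hik : i ≠ k) :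
    ⟪R (e i) (e j) (e k), e i⟫ = -3 * ω (e i) (e j) * ω (e i) (e k) ∧
    (⟪R (e i) (e j) (e k), e i⟫ = 1 ∨ ⟪R (e i) (e j) (e k), e i⟫ = -1) ∧
    ⟪R (e i) (e j) (e k), e i⟫ ≠ 0 :=
  stmt15_general V J hJ2 hJi ω hω e hsq R hR i j k hij hjk hik
end

section
/- Let V be a 4-dimensional real inner product space with orthogonal complex structure J (J² = −Id) and ω(x,y) = ⟪Jx,y⟫, and let e₁,...,e₄ be an orthonormal basis satisfying (ω(eᵢ,eⱼ))² = 1/3 for all i ≠ j and ω(e₁,e₂)ω(e₃,e₄) − ω(e₁,e₃)ω(e₂,e₄) + ω(e₁,e₄)ω(e₂,e₃) = 1. Then, possibly after reordering/sign changes of the basis vectors e₂, e₃, e₄, there exists ε ∈ {±1} such that with ω' = εω one has ω'(e₁,e₂) = ω'(e₃,e₄) = ω'(e₁,e₃) = −ω'(e₂,e₄) = ω'(e₁,e₄) = ω'(e₂,e₃) = 1/√3. -/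
open RealInnerProductSpace

private lemma sq1 (x : ℝ) (h : x ^ 2 = 1) : x = 1 ∨ x = -1 := by
  have h' : (x - 1) * (x + 1) = 0 := by ring_nf; linarith
  rcases mul_eq_zero.mp h' with h | h
  · left; linarith
  · right; linarith

theorem stmt19 (V : Type*) [NormedAddCommGroup V] [InnerProductSpace ℝ V]
    [FiniteDimensional ℝ V] (hdim : Module.finrank ℝ V = 4)
    (J : V →ₗ[ℝ] V) (hJ2 : ∀ x, J (J x) = -x)
    (hJi : ∀ x y, ⟪J x, J y⟫ = ⟪x, y⟫)
    (ω : V → V → ℝ) (hω : ∀ x y, ω x y = ⟪J x, y⟫)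
    (e : OrthonormalBasis (Fin 4) ℝ V)
    (hsq : ∀ i j : Fin 4, i ≠ j → (ω (e i) (e j)) ^ 2 = 1 / 3)
    (hPf : ω (e 0) (e 1) * ω (e 2) (e 3) - ω (e 0) (e 2) * ω (e 1) (e 3)
        + ω (e 0) (e 3) * ω (e 1) (e 2) = 1) :
    ∃ (ε : ℝ) (σ : Equiv.Perm (Fin 4)) (η : Fin 4 → ℝ),
      (ε = 1 ∨ ε = -1) ∧ σ 0 = 0 ∧ η 0 = 1 ∧ (∀ i, η i = 1 ∨ η i = -1) ∧
      (∀ f : Fin 4 → V, (∀ i, f i = η i • e (σ i)) →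
        ε * ω (f 0) (f 1) = 1 / Real.sqrt 3 ∧
        ε * ω (f 2) (f 3) = 1 / Real.sqrt 3 ∧
        ε * ω (f 0) (f 2) = 1 / Real.sqrt 3 ∧
        ε * ω (f 1) (f 3) = -(1 / Real.sqrt 3) ∧
        ε * ω (f 0) (f 3) = 1 / Real.sqrt 3 ∧
        ε * ω (f 1) (f 2) = 1 / Real.sqrt 3) := by
  have hsmul : ∀ (r r' : ℝ) (x y : V), ω (r • x) (r' • y) = r * r' * ω x y := by
    intro r r' x y
    rw [hω, hω, map_smul, real_inner_smul_left, real_inner_smul_right]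
    ring
  set s : ℝ := Real.sqrt 3 with hsdef
  have hs2 : s ^ 2 = 3 := Real.sq_sqrt (by norm_num)
  have hs0 : 0 < s := Real.sqrt_pos.mpr (by norm_num)
  set a := ω (e 0) (e 1) with hadef
  set b := ω (e 0) (e 2) with hbdef
  set c := ω (e 0) (e 3) with hcdef
  set d := ω (e 1) (e 2) with hddef
  set p := ω (e 1) (e 3) with hpdef
  set q := ω (e 2) (e 3) with hqdef
  have ha : a ^ 2 = 1 / 3 := hsq 0 1 (by decide)
  have hb : b ^ 2 = 1 / 3 := hsq 0 2 (by decide)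
  have hc : c ^ 2 = 1 / 3 := hsq 0 3 (by decide)
  have hd : d ^ 2 = 1 / 3 := hsq 1 2 (by decide)
  have hp : p ^ 2 = 1 / 3 := hsq 1 3 (by decide)
  have hq : q ^ 2 = 1 / 3 := hsq 2 3 (by decide)
  have hub : ∀ x : ℝ, x ^ 2 = 1 / 9 → x ≤ 1 / 3 ∧ -(1 / 3) ≤ x := by
    intro x h
    constructor
    · nlinarith [sq_nonneg (x - 1/3)]
    · nlinarith [sq_nonneg (x + 1/3)]
  have haq2 := hub (a * q) (by rw [mul_pow, ha, hq]; norm_num)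
  have hbp2 := hub (b * p) (by rw [mul_pow, hb, hp]; norm_num)
  have hcd2 := hub (c * d) (by rw [mul_pow, hc, hd]; norm_num)
  have haq : a * q = 1 / 3 := by linarith [haq2.1, haq2.2, hbp2.1, hbp2.2, hcd2.1, hcd2.2]
  have hbp : b * p = -(1 / 3) := by linarith [haq2.1, haq2.2, hbp2.1, hbp2.2, hcd2.1, hcd2.2]
  have hcd : c * d = 1 / 3 := by linarith [haq2.1, haq2.2, hbp2.1, hbp2.2, hcd2.1, hcd2.2]
  have hane : a ≠ 0 := by intro h; rw [h] at ha; norm_num at ha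
  have hbne : b ≠ 0 := by intro h; rw [h] at hb; norm_num at hb
  have hcne : c ≠ 0 := by intro h; rw [h] at hc; norm_num at hc
  have hqa : q = a := mul_left_cancel₀ hane (by rw [haq]; linear_combination -ha)
  have hpb : p = -b := mul_left_cancel₀ hbne (by rw [hbp]; linear_combination hb)
  have hdc : d = c := mul_left_cancel₀ hcne (by rw [hcd]; linear_combination -hc)
  set ε : ℝ := 3 * s * (a * b * c) with hεdef
  have hε2 : ε ^ 2 = 1 := by
    have h9 : ε ^ 2 = 9 * s ^ 2 * (a ^ 2 * b ^ 2 * c ^ 2) := by ring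
    rw [h9, hs2, ha, hb, hc]; norm_num
  have hεpm : ε = 1 ∨ ε = -1 := sq1 ε hε2
  have h13 : (1 : ℝ) / s = s / 3 := by
    rw [div_eq_div_iff hs0.ne' (by norm_num : (3:ℝ) ≠ 0)]
    linear_combination -hs2
  have hG : s ^ 2 * ε ^ 3 * (a * b * c) = s / 3 := by
    linear_combination s^2*(a*b*c)*ε*hε2 + s^2*(a*b*c)*hεdef + 3*s^3*b^2*c^2*ha
      + s^3*c^2*hb + (s^3/3)*hc + (s/9)*hs2
  refine ⟨ε, 1, ![1, s * ε * a, s * ε * b, s * ε * c], hεpm, rfl, rfl, ?_, ?_⟩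
  · intro i
    fin_cases i
    · left; rfl
    · exact sq1 _ (by show (s*ε*a)^2 = 1; rw [mul_pow, mul_pow, hs2, hε2, ha]; norm_num)
    · exact sq1 _ (by show (s*ε*b)^2 = 1; rw [mul_pow, mul_pow, hs2, hε2, hb]; norm_num)
    · exact sq1 _ (by show (s*ε*c)^2 = 1; rw [mul_pow, mul_pow, hs2, hε2, hc]; norm_num)
  · intro f hf
    have h0 : f 0 = (1 : ℝ) • e 0 := by simpa using hf 0
    have h1 : f 1 = (s * ε * a) • e 1 := by simpa using hf 1
    have h2 : f 2 = (s * ε * b) • e 2 := by simpa using hf 2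
    have h3 : f 3 = (s * ε * c) • e 3 := by simpa using hf 3
    rw [h13]
    refine ⟨?_, ?_, ?_, ?_, ?_, ?_⟩
    · rw [h0, h1, hsmul, ← hadef]
      linear_combination s*a^2*hε2 + s*ha
    · rw [h2, h3, hsmul, ← hqdef, hqa]
      linear_combination hG
    · rw [h0, h2, hsmul, ← hbdef]
      linear_combination s*b^2*hε2 + s*hb
    · rw [h1, h3, hsmul, ← hpdef, hpb]
      linear_combination -hG
    · rw [h0, h3, hsmul, ← hcdef]
      linear_combination s*c^2*hε2 + s*hc
    · rw [h1, h2, hsmul, ← hddef, hdc]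
      linear_combination hG
end
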